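/- Let G be a finite connected simple graph on n ≥ 1 vertices with diameter D, and let k ≥ 1 be an integer. Then for every integer a ≥ 1, the inequality T_{a·k}(G) ≤ 6·√a · T_k(G) holds (as an inequality of real numbers). -/

import Mathlib

open SimpleGraph

/-- The ball of radius `t` around `v`: all vertices at hop distance at most `t` from `v`. -/
def SimpleGraph.broadcastBall {V : Type*} (G : SimpleGraph V) (v : V) (t : ℕ) : Set V :=
  {w | G.dist v w ≤ t}

/-- The broadcast quality of a vertex `v`:
`T_k(v) = min ({t : t ≥ 1 and t·|B_t(v)| ≥ k} ∪ {D})` where `D` is the diameter. -/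
noncomputable def SimpleGraph.broadcastQuality {V : Type*} (G : SimpleGraph V) (k : ℕ)
    (v : V) : ℕ :=
  sInf ({t : ℕ | 1 ≤ t ∧ k ≤ t * (G.broadcastBall v t).ncard} ∪ {G.diam})

/-- The broadcast quality of the graph: `T_k(G) = max_v T_k(v)`. -/
noncomputable def SimpleGraph.broadcastQualityGraph {V : Type*} [Fintype V]
    (G : SimpleGraph V) (k : ℕ) : ℕ :=
  Finset.univ.sup (fun v => G.broadcastQuality k v)

/-! Put `T = T_k(G)`. If `D ≤ T`, every `T_{ak}(v)` is at most `D ≤ T`. Otherwise every vertex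
`u` has `k ≤ T·|B_T(u)|`; pick `s ≈ √(a/2)` with `a ≤ 2(s+1)²`. If `v` has a vertex at distance
`≥ s(2T+1)`, a geodesic towards it carries `s+1` vertices at mutual distance `> 2T`; their
disjoint `T`-balls lie in `B_{s(2T+1)+T}(v)`, which therefore has at least `(s+1)k/T` vertices,
enough for the radius `2(s(2T+1)+T)` to serve `ak`. If it has none, `D ≤ 2·ecc(v)` is already
below that radius. Either way `T_{ak}(v) ≤ (6s+2)T ≤ 6√a·T`. -/

open Function in
theorem Set.sum_ncard_le_ncard_of_pairwise_disjoint {α ι : Type*} [Fintype ι] {s : ι → Set α}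
    {B : Set α} (hB : B.Finite) (hdisj : Pairwise (Disjoint on s)) (hsub : ∀ i, s i ⊆ B) :
    ∑ i, (s i).ncard ≤ B.ncard := by
  rw [← finsum_eq_sum_of_fintype,
    ← Set.ncard_iUnion_of_finite (fun i => hB.subset (hsub i)) hdisj]
  exact Set.ncard_le_ncard (Set.iUnion_subset hsub) hB

theorem exists_le_two_mul_succ_sq_and_le_sqrt {a : ℕ} (ha : 1 ≤ a) :
    ∃ s : ℕ, a ≤ 2 * (s + 1) ^ 2 ∧ (6 * s + 2 : ℝ) ≤ 6 * Real.sqrt a := by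
  set s := Nat.sqrt ((a - 1) / 2)
  have hupper : (a - 1) / 2 < (s + 1) ^ 2 := Nat.lt_succ_sqrt' _
  have hlower : s ^ 2 ≤ (a - 1) / 2 := Nat.sqrt_le' _
  refine ⟨s, by omega, ?_⟩
  -- `(s + 1/3)² ≤ 2s² + 1 ≤ a`
  have hs : (2 * s ^ 2 + 1 : ℝ) ≤ a := by exact_mod_cast (by omega : 2 * s ^ 2 + 1 ≤ a)
  have : (s + 1 / 3 : ℝ) ≤ Real.sqrt a := Real.le_sqrt_of_sq_le (by nlinarith)
  linarith

namespace SimpleGraph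

variable {V : Type*} {G : SimpleGraph V}

theorem Connected.exists_dist_eq_of_le_dist (hconn : G.Connected) {v w : V} {d : ℕ}
    (hd : d ≤ G.dist v w) : ∃ u, G.dist v u = d := by
  obtain ⟨p, hp⟩ := hconn.exists_walk_length_eq_dist v w
  refine ⟨p.getVert d, le_antisymm ((dist_le (p.take d)).trans ?_) ?_⟩
  · simp [Walk.take_length]
  · have hfar : G.dist (p.getVert d) w ≤ G.dist v w - d :=
      (dist_le (p.drop d)).trans (by rw [Walk.drop_length, hp])
    have := hconn.dist_triangle (u := v) (v := p.getVert d) (w := w)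
    omega

theorem Connected.exists_diam_le_two_mul_dist (hconn : G.Connected) (v : V) :
    ∃ w, G.diam ≤ 2 * G.dist v w := by
  have := hconn.nonempty
  obtain ⟨x, y, hxy⟩ := G.exists_dist_eq_diam
  have htri : G.dist x y ≤ G.dist v x + G.dist v y := by
    rw [dist_comm (u := v)]; exact hconn.dist_triangle
  rcases le_total (G.dist v x) (G.dist v y) with h | h
  · exact ⟨y, by omega⟩
  · exact ⟨x, by omega⟩

theorem broadcastBall_mono (v : V) {r R : ℕ} (h : r ≤ R) :
    G.broadcastBall v r ⊆ G.broadcastBall v R :=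
  fun _ hw => le_trans hw h

theorem Connected.broadcastBall_subset (hconn : G.Connected) {u v : V} {r R : ℕ}
    (h : G.dist v u + r ≤ R) : G.broadcastBall u r ⊆ G.broadcastBall v R :=
  fun w (hw : G.dist u w ≤ r) => (hconn.dist_triangle (v := u)).trans (by omega)

theorem Connected.disjoint_broadcastBall (hconn : G.Connected) {u v : V} {r s : ℕ}
    (h : r + s < G.dist u v) : Disjoint (G.broadcastBall u r) (G.broadcastBall v s) := by
  refine Set.disjoint_left.2 fun w (hu : G.dist u w ≤ r) (hv : G.dist v w ≤ s) => ?_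
  have := hconn.dist_triangle (u := u) (v := w) (w := v)
  rw [dist_comm (u := w)] at this
  omega

theorem broadcastBall_finite [Finite V] (v : V) (t : ℕ) : (G.broadcastBall v t).Finite :=
  Set.toFinite _

theorem broadcastQuality_le {k t : ℕ} {v : V} (ht : 1 ≤ t)
    (hk : k ≤ t * (G.broadcastBall v t).ncard) : G.broadcastQuality k v ≤ t :=
  Nat.sInf_le (Or.inl ⟨ht, hk⟩)

theorem broadcastQuality_le_diam (k : ℕ) (v : V) : G.broadcastQuality k v ≤ G.diam :=
  Nat.sInf_le (Or.inr rfl)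

theorem le_mul_ncard_of_broadcastQuality_le [Finite V] {k t : ℕ} {v : V}
    (ht : G.broadcastQuality k v ≤ t) (hD : t < G.diam) :
    1 ≤ t ∧ k ≤ t * (G.broadcastBall v t).ncard := by
  have hmem : G.broadcastQuality k v ∈
      {t : ℕ | 1 ≤ t ∧ k ≤ t * (G.broadcastBall v t).ncard} ∪ {G.diam} :=
    Nat.sInf_mem ⟨G.diam, Or.inr rfl⟩
  rcases hmem with ⟨h1, hk⟩ | hdiam
  · refine ⟨h1.trans ht, hk.trans (Nat.mul_le_mul ht ?_)⟩
    exact Set.ncard_le_ncard (broadcastBall_mono v ht) (broadcastBall_finite v t)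
  · exact absurd (hdiam ▸ ht) hD.not_ge

open Function in
theorem Connected.succ_mul_le_mul_ncard_broadcastBall [Finite V] (hconn : G.Connected)
    {k T : ℕ} (hball : ∀ u, k ≤ T * (G.broadcastBall u T).ncard) {s : ℕ} {v w : V}
    (hw : s * (2 * T + 1) ≤ G.dist v w) :
    (s + 1) * k ≤ T * (G.broadcastBall v (s * (2 * T + 1) + T)).ncard := by
  have hcenter (i : Fin (s + 1)) : ∃ u, G.dist v u = i * (2 * T + 1) :=
    hconn.exists_dist_eq_of_le_dist ((Nat.mul_le_mul_right _ (Nat.lt_succ_iff.1 i.2)).trans hw)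
  choose u hu using hcenter
  have hdisj : Pairwise (Disjoint on fun i => G.broadcastBall (u i) T) := by
    refine (pairwise_disjoint_on _).2 fun i j hij => hconn.disjoint_broadcastBall ?_
    have hgap : i * (2 * T + 1) + (2 * T + 1) ≤ j * (2 * T + 1) := by
      rw [← Nat.succ_mul]; exact Nat.mul_le_mul_right _ hij
    have htri := hconn.dist_triangle (u := v) (v := u i) (w := u j)
    rw [hu i, hu j] at htri
    omega
  have hsub (i : Fin (s + 1)) :
      G.broadcastBall (u i) T ⊆ G.broadcastBall v (s * (2 * T + 1) + T) :=
    hconn.broadcastBall_subset (by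
      rw [hu i]; exact Nat.add_le_add_right (Nat.mul_le_mul_right _ (Nat.lt_succ_iff.1 i.2)) T)
  calc (s + 1) * k = ∑ _i : Fin (s + 1), k := by simp
    _ ≤ ∑ i, T * (G.broadcastBall (u i) T).ncard := Finset.sum_le_sum fun i _ => hball (u i)
    _ = T * ∑ i, (G.broadcastBall (u i) T).ncard := (Finset.mul_sum ..).symm
    _ ≤ T * (G.broadcastBall v (s * (2 * T + 1) + T)).ncard :=
      Nat.mul_le_mul_left _
        (Set.sum_ncard_le_ncard_of_pairwise_disjoint (broadcastBall_finite _ _) hdisj hsub)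

theorem Connected.broadcastQuality_mul_le [Finite V] (hconn : G.Connected) {k T : ℕ}
    (hT : 1 ≤ T) (hball : ∀ u, k ≤ T * (G.broadcastBall u T).ncard) {a s : ℕ}
    (ha : a ≤ 2 * (s + 1) ^ 2) (v : V) :
    G.broadcastQuality (a * k) v ≤ 2 * (s * (2 * T + 1) + T) := by
  obtain ⟨w, hw⟩ := hconn.exists_diam_le_two_mul_dist v
  by_cases hfar : s * (2 * T + 1) ≤ G.dist v w
  · have hR : (s + 1) * T ≤ s * (2 * T + 1) + T := by nlinarith
    set R := s * (2 * T + 1) + T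
    have hpack := hconn.succ_mul_le_mul_ncard_broadcastBall hball hfar
    refine broadcastQuality_le (by omega) ?_
    calc a * k ≤ 2 * (s + 1) ^ 2 * k := Nat.mul_le_mul_right k ha
      _ = 2 * (s + 1) * ((s + 1) * k) := by ring
      _ ≤ 2 * (s + 1) * (T * (G.broadcastBall v R).ncard) := Nat.mul_le_mul_left _ hpack
      _ = 2 * ((s + 1) * T) * (G.broadcastBall v R).ncard := by ring
      _ ≤ 2 * R * (G.broadcastBall v (2 * R)).ncard :=
        Nat.mul_le_mul (by omega)
          (Set.ncard_le_ncard (broadcastBall_mono v (by omega)) (broadcastBall_finite v _))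
  · have := G.broadcastQuality_le_diam (a * k) v
    omega

theorem broadcastQuality_le_broadcastQualityGraph [Fintype V] (k : ℕ) (v : V) :
    G.broadcastQuality k v ≤ G.broadcastQualityGraph k :=
  Finset.le_sup (Finset.mem_univ v)

theorem broadcastQualityGraph_le_iff [Fintype V] {k t : ℕ} :
    G.broadcastQualityGraph k ≤ t ↔ ∀ v, G.broadcastQuality k v ≤ t := by
  simp [broadcastQualityGraph]

end SimpleGraph

theorem growth_of_Tk_general {V : Type*} [Fintype V] (G : SimpleGraph V)
    (hconn : G.Connected) (k : ℕ) (a : ℕ) (ha : 1 ≤ a) :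
    (G.broadcastQualityGraph (a * k) : ℝ) ≤
      6 * Real.sqrt a * (G.broadcastQualityGraph k : ℝ) := by
  set T := G.broadcastQualityGraph k
  obtain ⟨s, has, hs⟩ := exists_le_two_mul_succ_sq_and_le_sqrt ha
  have hbound : G.broadcastQualityGraph (a * k) ≤ (6 * s + 2) * T := by
    refine G.broadcastQualityGraph_le_iff.2 fun v => ?_
    rcases le_or_gt G.diam T with hD | hD
    · exact (G.broadcastQuality_le_diam _ v).trans (hD.trans (Nat.le_mul_of_pos_left _ (by omega)))
    · have hball (u : V) := G.le_mul_ncard_of_broadcastQuality_le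
        (G.broadcastQuality_le_broadcastQualityGraph k u) hD
      have hT := (hball v).1
      exact (hconn.broadcastQuality_mul_le hT (fun u => (hball u).2) has v).trans (by nlinarith)
  calc (G.broadcastQualityGraph (a * k) : ℝ) ≤ ((6 * s + 2) * T : ℕ) := by
        exact_mod_cast hbound
    _ ≤ 6 * Real.sqrt a * T := by push_cast; gcongr

theorem growth_of_Tk {V : Type*} [Fintype V] [Nonempty V] (G : SimpleGraph V)
    (hconn : G.Connected) (k : ℕ) (hk : 1 ≤ k) (a : ℕ) (ha : 1 ≤ a) :
    (G.broadcastQualityGraph (a * k) : ℝ) ≤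
      6 * Real.sqrt a * (G.broadcastQualityGraph k : ℝ) :=
  growth_of_Tk_general G hconn k a ha
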